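/- Suppose f: [0,∞) → (0,∞) is continuous with f(x) ~ x^β (log x)^α as x → ∞, where β ∈ (0,1), α ∈ ℝ. Let F(x) = ∫₁ˣ du/f(u). Then F(x) ~ (1/(1−β)) x^{1−β} (log x)^{−α} as x → ∞, and F⁻¹(y) ~ (1−β)^{(1−α)/(1−β)} (log y)^{α/(1−β)} y^{1/(1−β)} as y → ∞. -/

import Mathlib

/-!
The function `G x = x ^ (1 - β) * (log x) ^ (-α) / (1 - β)` has derivative
`x ^ (-β) * (log x) ^ (-α) * (1 - α / ((1 - β) * log x)) ~ 1 / f x`. Asymptotic equivalence of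
integrands is inherited by their integrals once the integrals diverge (split off a compact
piece and bound the tail by `ε` times the integral), so `F ~ G`.

For the inverse put `x = F⁻¹ y`, so that `y ~ G x`. Taking logarithms kills the slowly varying
factor: `log y ~ (1 - β) log x`. Feeding `log x ~ log y / (1 - β)` back into
`x ^ (1 - β) ~ (1 - β) y (log x) ^ α` and taking the `1 / (1 - β)`-th power gives `F⁻¹ y`.
-/

open Filter Real Set MeasureTheory Asymptotics intervalIntegral Topology

theorem Asymptotics.IsLittleO.intervalIntegral {E : Type*} [NormedAddCommGroup E]
    [NormedSpace ℝ E] {f : ℝ → E} {g : ℝ → ℝ} {a : ℝ} (h : f =o[atTop] g)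
    (hf : ∀ x ≥ a, IntervalIntegrable f volume a x) (hg : ∀ x ≥ a, IntervalIntegrable g volume a x)
    (hg_nonneg : ∀ᶠ x in atTop, 0 ≤ g x)
    (hg_top : Tendsto (fun x => ∫ u in a..x, g u) atTop atTop) :
    (fun x => ∫ u in a..x, f u) =o[atTop] fun x => ∫ u in a..x, g u := by
  refine isLittleO_iff.2 fun ε hε => ?_
  obtain ⟨X, hX⟩ := eventually_atTop.1
    ((h.bound (half_pos hε)).and (hg_nonneg.and (eventually_ge_atTop a)))
  have hXa : a ≤ X := (hX X le_rfl).2.2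
  filter_upwards [eventually_ge_atTop X, hg_top.eventually_ge_atTop
    (2 * (‖∫ u in a..X, f u‖ - ε / 2 * ∫ u in a..X, g u) / ε)] with x hxX hx_large
  have hxa : a ≤ x := hXa.trans hxX
  have hgXx : IntervalIntegrable g volume X x := (hg X hXa).symm.trans (hg x hxa)
  have tail : ‖∫ u in X..x, f u‖ ≤ ε / 2 * ∫ u in X..x, g u := by
    rw [← intervalIntegral.integral_const_mul]
    refine norm_integral_le_of_norm_le hxX (ae_of_all _ fun u hu => ?_) (hgXx.const_mul _)
    obtain ⟨hfu, hgu, -⟩ := hX u hu.1.le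
    rwa [Real.norm_of_nonneg hgu] at hfu
  rw [div_le_iff₀ hε] at hx_large
  calc ‖∫ u in a..x, f u‖
      = ‖(∫ u in a..X, f u) + ∫ u in X..x, f u‖ := by
        rw [integral_add_adjacent_intervals (hf X hXa) ((hf X hXa).symm.trans (hf x hxa))]
    _ ≤ ‖∫ u in a..X, f u‖ + ε / 2 * ∫ u in X..x, g u := norm_add_le_of_le le_rfl tail
    _ = ‖∫ u in a..X, f u‖ - ε / 2 * (∫ u in a..X, g u) + ε / 2 * ∫ u in a..x, g u := by
        rw [← integral_add_adjacent_intervals (hg X hXa) hgXx]; ring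
    _ ≤ ε * ∫ u in a..x, g u := by linarith
    _ ≤ ε * ‖∫ u in a..x, g u‖ := mul_le_mul_of_nonneg_left (Real.le_norm_self _) hε.le

theorem Asymptotics.IsEquivalent.intervalIntegral {f g : ℝ → ℝ} {a : ℝ} (h : f ~[atTop] g)
    (hf : ∀ x ≥ a, IntervalIntegrable f volume a x) (hg : ∀ x ≥ a, IntervalIntegrable g volume a x)
    (hg_nonneg : ∀ᶠ x in atTop, 0 ≤ g x)
    (hg_top : Tendsto (fun x => ∫ u in a..x, g u) atTop atTop) :
    (fun x => ∫ u in a..x, f u) ~[atTop] fun x => ∫ u in a..x, g u := by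
  refine (IsLittleO.intervalIntegral h (fun x hx => (hf x hx).sub (hg x hx)) hg hg_nonneg
    hg_top).congr' ?_ EventuallyEq.rfl
  filter_upwards [eventually_ge_atTop a] with x hx
  exact integral_sub (hf x hx) (hg x hx)

theorem Asymptotics.IsEquivalent.intervalIntegral_of_hasDerivAt {φ G G' : ℝ → ℝ} {a : ℝ}
    (h : φ ~[atTop] G') (hφ : ∀ x ≥ a, IntervalIntegrable φ volume a x)
    (hG : ∀ x ≥ a, HasDerivAt G (G' x) x) (hG' : ∀ x ≥ a, IntervalIntegrable G' volume a x)
    (hG'_nonneg : ∀ᶠ x in atTop, 0 ≤ G' x) (hG_top : Tendsto G atTop atTop) :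
    (fun x => ∫ u in a..x, φ u) ~[atTop] G := by
  have hG_equiv : (fun x => ∫ u in a..x, G' u) ~[atTop] G := by
    refine (IsEquivalent.refl.add_const_of_norm_tendsto_atTop (c := -G a)
      (tendsto_norm_atTop_atTop.comp hG_top)).congr_left ?_
    filter_upwards [eventually_ge_atTop a] with x hx
    rw [integral_eq_sub_of_hasDerivAt (fun u hu => hG u (uIcc_of_le hx ▸ hu).1) (hG' x hx),
      sub_eq_add_neg]
  exact (h.intervalIntegral hφ hG' hG'_nonneg (hG_equiv.symm.tendsto_atTop hG_top)).trans hG_equiv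

theorem Asymptotics.IsEquivalent.rpow_of_eventually_nonneg {ι : Type*} {l : Filter ι}
    {u v : ι → ℝ} (h : u ~[l] v) (hv : ∀ᶠ i in l, 0 ≤ v i) (r : ℝ) :
    (fun i => u i ^ r) ~[l] fun i => v i ^ r := by
  have hv_max : v =ᶠ[l] fun i => max (v i) 0 := hv.mono fun i hi => (max_eq_left hi).symm
  exact ((h.congr_right hv_max).rpow (fun i => le_max_right _ _)).congr_right
    (hv_max.symm.fun_comp (· ^ r))

theorem hasDerivAt_rpow_mul_log_rpow (γ δ : ℝ) {x : ℝ} (hx : 0 < x) (hx₁ : x ≠ 1) :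
    HasDerivAt (fun x => x ^ γ * log x ^ δ) (x ^ (γ - 1) * log x ^ δ * (γ + δ / log x)) x := by
  have hlog : log x ≠ 0 := log_ne_zero_of_pos_of_ne_one hx hx₁
  refine ((hasDerivAt_rpow_const (p := γ) (Or.inl hx.ne')).mul
    ((hasDerivAt_log hx.ne').rpow_const (p := δ) (Or.inl hlog))).congr_deriv ?_
  rw [rpow_sub_one hx.ne', rpow_sub_one hlog]
  field_simp

theorem tendsto_rpow_mul_log_rpow_atTop {γ : ℝ} (hγ : 0 < γ) (δ : ℝ) :
    Tendsto (fun x => x ^ γ * log x ^ δ) atTop atTop := by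
  have hratio : Tendsto (fun x => log x ^ (-δ) / x ^ γ) atTop (𝓝[>] 0) := by
    refine tendsto_nhdsWithin_iff.2
      ⟨(isLittleO_log_rpow_rpow_atTop _ hγ).tendsto_div_nhds_zero, ?_⟩
    filter_upwards [eventually_gt_atTop 1] with x hx
    have := log_pos hx
    exact mem_Ioi.2 (by positivity)
  refine (tendsto_inv_nhdsGT_zero.comp hratio).congr' ?_
  filter_upwards [eventually_gt_atTop 1] with x hx
  simp [rpow_neg (log_pos hx).le]

theorem isEquivalent_intervalIntegral_rpow_mul_log_rpow_of_one_lt {φ : ℝ → ℝ} {a γ δ : ℝ}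
    (ha : 1 < a) (hγ : 0 < γ) (h : φ ~[atTop] fun x => x ^ (γ - 1) * log x ^ δ)
    (hφ : ∀ x ≥ a, IntervalIntegrable φ volume a x) :
    (fun x => ∫ u in a..x, φ u) ~[atTop] fun x => γ⁻¹ * (x ^ γ * log x ^ δ) := by
  set G' : ℝ → ℝ := fun x => γ⁻¹ * (x ^ (γ - 1) * log x ^ δ * (γ + δ / log x))
  have hG' : ContinuousOn G' (Ioi 1) := by
    intro x hx
    have hx₀ : x ≠ 0 := (zero_lt_one.trans hx).ne'
    have hlog : log x ≠ 0 := (log_pos hx).ne'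
    exact (show ContinuousAt G' x by fun_prop (disch := simp [*])).continuousWithinAt
  have hG'_equiv : G' ~[atTop] fun x => x ^ (γ - 1) * log x ^ δ := by
    have hlim : Tendsto (fun x => γ⁻¹ * (γ + δ / log x)) atTop (𝓝 1) := by
      simpa [hγ.ne'] using
        ((tendsto_const_nhds.div_atTop tendsto_log_atTop).const_add γ).const_mul γ⁻¹
    have hmul := (IsEquivalent.refl (u := fun x : ℝ => x ^ (γ - 1) * log x ^ δ)).mul
      ((isEquivalent_const_iff_tendsto one_ne_zero).2 hlim)
    refine (hmul.congr_left ?_).congr_right ?_ <;> filter_upwards with x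
    · simp only [G', Pi.mul_apply]; ring
    · simp
  have hG'_nonneg : ∀ᶠ x in atTop, 0 ≤ G' x := by
    refine (hG'_equiv.eventually_pos ?_).mono fun x hx => hx.le
    filter_upwards [eventually_gt_atTop 1] with x hx
    have := log_pos hx
    positivity
  refine (h.trans hG'_equiv.symm).intervalIntegral_of_hasDerivAt hφ (fun x hx => ?_)
    (fun x hx => (hG'.mono ?_).intervalIntegrable) hG'_nonneg
    ((tendsto_rpow_mul_log_rpow_atTop hγ δ).const_mul_atTop (inv_pos.2 hγ))
  · have hx₁ : 1 < x := ha.trans_le hx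
    exact (hasDerivAt_rpow_mul_log_rpow γ δ (zero_lt_one.trans hx₁) hx₁.ne').const_mul γ⁻¹
  · rw [uIcc_of_le hx]
    exact fun u hu => ha.trans_le hu.1

theorem isEquivalent_intervalIntegral_rpow_mul_log_rpow {φ : ℝ → ℝ} {a γ δ : ℝ} (hγ : 0 < γ)
    (h : φ ~[atTop] fun x => x ^ (γ - 1) * log x ^ δ)
    (hφ : ∀ x ≥ a, IntervalIntegrable φ volume a x) :
    (fun x => ∫ u in a..x, φ u) ~[atTop] fun x => γ⁻¹ * (x ^ γ * log x ^ δ) := by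
  set b := max a 2
  have hab : a ≤ b := le_max_left a 2
  have hφ_b : ∀ x ≥ b, IntervalIntegrable φ volume b x :=
    fun x hx => (hφ b hab).symm.trans (hφ x (hab.trans hx))
  refine ((isEquivalent_intervalIntegral_rpow_mul_log_rpow_of_one_lt
    (one_lt_two.trans_le (le_max_right a 2)) hγ h hφ_b).const_add_of_norm_tendsto_atTop
    (c := ∫ u in a..b, φ u) (tendsto_norm_atTop_atTop.comp
      ((tendsto_rpow_mul_log_rpow_atTop hγ δ).const_mul_atTop (inv_pos.2 hγ)))).congr_left ?_
  filter_upwards [eventually_ge_atTop b] with x hx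
  exact integral_add_adjacent_intervals (hφ b hab) (hφ_b x hx)

theorem isEquivalent_one_div_of_tendsto_div_rpow_mul_log_rpow {f : ℝ → ℝ} {β α : ℝ}
    (h : Tendsto (fun x => f x / (x ^ β * log x ^ α)) atTop (𝓝 1)) :
    (fun x => 1 / f x) ~[atTop] fun x => x ^ (-β) * log x ^ (-α) := by
  have hne : ∀ᶠ x : ℝ in atTop, x ^ β * log x ^ α ≠ 0 := by
    filter_upwards [eventually_gt_atTop 1] with x hx
    have := log_pos hx
    positivity
  refine ((isEquivalent_iff_tendsto_one hne).2 h).inv.congr_left ?_ |>.congr_right ?_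
  · filter_upwards with x
    simp
  · filter_upwards [eventually_gt_atTop 1] with x hx
    rw [Pi.inv_apply, mul_inv, rpow_neg (zero_le_one.trans hx.le), rpow_neg (log_pos hx).le]

theorem isEquivalent_log_const_mul_rpow_mul_log_rpow {c γ : ℝ} (hc : 0 < c) (hγ : γ ≠ 0)
    (δ : ℝ) : (fun x => log (c * (x ^ γ * log x ^ δ))) ~[atTop] fun x => γ * log x := by
  have hloglog : (fun x => log (log x)) =o[atTop] log :=
    isLittleO_log_id_atTop.comp_tendsto tendsto_log_atTop
  have hconst : (fun _ => log c) =o[atTop] log :=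
    isLittleO_const_left.2 (Or.inr (tendsto_norm_atTop_atTop.comp tendsto_log_atTop))
  have hlower : (fun x => log c + δ * log (log x)) =o[atTop] fun x => γ * log x :=
    (hconst.add (hloglog.const_mul_left δ)).const_mul_right hγ
  refine (hlower.add_isEquivalent IsEquivalent.refl).congr_left ?_
  filter_upwards [eventually_gt_atTop 1] with x hx
  have hlog := log_pos hx
  have hx₀ : 0 < x := zero_lt_one.trans hx
  rw [Pi.add_apply, log_mul hc.ne' (by positivity), log_mul (by positivity) (by positivity),
    log_rpow hx₀, log_rpow hlog]
  ring

theorem isEquivalent_of_isEquivalent_const_mul_rpow_mul_log_rpow {ι : Type*} {l : Filter ι}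
    {x t : ι → ℝ} {c γ δ : ℝ} (hc : 0 < c) (hγ : 0 < γ) (hx : Tendsto x l atTop)
    (h : t ~[l] fun i => c * (x i ^ γ * log (x i) ^ δ)) :
    x ~[l] fun i => (t i * (log (t i) / γ) ^ (-δ) / c) ^ γ⁻¹ := by
  have hlog_x : Tendsto (fun i => log (x i)) l atTop := tendsto_log_atTop.comp hx
  have hg_top : Tendsto (fun i => c * (x i ^ γ * log (x i) ^ δ)) l atTop :=
    ((tendsto_rpow_mul_log_rpow_atTop hγ δ).const_mul_atTop hc).comp hx
  have ht_top : Tendsto t l atTop := h.symm.tendsto_atTop hg_top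
  have hlog_t : (fun i => log (t i) / γ) ~[l] fun i => log (x i) := by
    have hlog := (h.log hg_top).trans
      ((isEquivalent_log_const_mul_rpow_mul_log_rpow hc hγ.ne' δ).comp_tendsto hx)
    refine (hlog.div (IsEquivalent.refl (u := fun _ => γ))).congr_right ?_
    filter_upwards with i
    simp only [Function.comp_apply, Pi.div_apply]
    field_simp
  have hpow : (fun i => x i ^ γ) ~[l] fun i => t i * (log (t i) / γ) ^ (-δ) / c := by
    have hlog_pow := hlog_t.rpow_of_eventually_nonneg (hlog_x.eventually_ge_atTop 0) (-δ)
    refine ((h.symm.mul hlog_pow.symm).div (IsEquivalent.refl (u := fun _ => c))).congr_left ?_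
    filter_upwards [hlog_x.eventually_gt_atTop 0] with i hi
    simp only [Pi.mul_apply, Pi.div_apply, rpow_neg hi.le]
    field_simp
  refine (hpow.rpow_of_eventually_nonneg ?_ γ⁻¹).congr_left ?_
  · filter_upwards [ht_top.eventually_ge_atTop 1] with i hi
    have := log_nonneg hi
    positivity
  · filter_upwards [hx.eventually_ge_atTop 0] with i hi
    exact rpow_rpow_inv hi hγ.ne'

theorem mul_div_rpow_div_inv_rpow_inv {γ α t L : ℝ} (hγ : 0 < γ) (ht : 0 ≤ t) (hL : 0 ≤ L) :
    (t * (L / γ) ^ α / γ⁻¹) ^ γ⁻¹ = γ ^ ((1 - α) / γ) * L ^ (α / γ) * t ^ (1 / γ) := by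
  have h : t * (L / γ) ^ α / γ⁻¹ = γ ^ (1 - α) * L ^ α * t := by
    rw [div_rpow hL hγ.le, rpow_sub hγ, rpow_one]
    field_simp
  rw [h, mul_rpow (by positivity) ht, mul_rpow (by positivity) (rpow_nonneg hL α),
    ← rpow_mul hγ.le, ← rpow_mul hL, div_eq_mul_inv, div_eq_mul_inv, one_div]

theorem monotoneOn_intervalIntegral_of_nonneg {f : ℝ → ℝ} {a : ℝ}
    (hf : ∀ x ≥ a, IntervalIntegrable f volume a x) (hf_nonneg : ∀ x ≥ a, 0 ≤ f x) :
    MonotoneOn (fun x => ∫ u in a..x, f u) (Ici a) := fun _ hy x hx hyx =>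
  integral_mono_interval le_rfl hy hyx
    ((ae_restrict_iff' measurableSet_Ioc).2 (ae_of_all _ fun u hu => hf_nonneg u hu.1.le))
    (hf x hx)

theorem tendsto_atTop_of_monotoneOn_of_rightInverse {α β : Type*} [LinearOrder α] [Preorder β]
    [NoMaxOrder β] {F : α → β} {G : β → α} {a : α} (hF : MonotoneOn F (Ici a))
    (hG_ge : ∀ᶠ t in atTop, a ≤ G t) (hFG : ∀ᶠ t in atTop, F (G t) = t) :
    Tendsto G atTop atTop := by
  refine tendsto_atTop.2 fun M => ?_
  filter_upwards [hG_ge, hFG, eventually_gt_atTop (F (max M a))] with t hat hFt hlt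
  by_contra! hM
  have := hF hat (le_max_right M a) (hM.le.trans (le_max_left M a))
  exact (hFt ▸ this).not_gt hlt

theorem stmt_15_general (f F Finv : ℝ → ℝ) (α β : ℝ)
    (hβ : β ∈ Set.Ioo (0:ℝ) 1)
    (hf_cont : ContinuousOn f (Set.Ici 0))
    (hf_pos : ∀ x ∈ Set.Ici (0:ℝ), 0 < f x)
    (hasym : Tendsto (fun x => f x / (x ^ β * Real.log x ^ α)) atTop (nhds 1))
    (hF : ∀ x > (0:ℝ), F x = ∫ u in (1:ℝ)..x, 1 / f u)
    (hFinv_right : ∀ t ≥ (0:ℝ), F (Finv t) = t)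
    (hFinv_ge : ∀ t ≥ (0:ℝ), 1 ≤ Finv t) :
    Tendsto (fun x => F x / ((1 / (1 - β)) * x ^ (1 - β) * Real.log x ^ (-α)))
        atTop (nhds 1) ∧
      Tendsto (fun y =>
          Finv y /
            ((1 - β) ^ ((1 - α) / (1 - β)) * Real.log y ^ (α / (1 - β)) *
              y ^ (1 / (1 - β)))) atTop (nhds 1) := by
  have hγ : 0 < 1 - β := sub_pos.2 hβ.2
  have hint : ∀ x ≥ (1:ℝ), IntervalIntegrable (fun u => 1 / f u) volume 1 x :=
    fun x hx => ((continuousOn_const.div hf_cont fun u hu => (hf_pos u hu).ne').mono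
      (by rw [uIcc_of_le hx]; exact fun u hu => zero_le_one.trans hu.1)).intervalIntegrable
  have hrecip : (fun u => 1 / f u) ~[atTop] fun x => x ^ (1 - β - 1) * log x ^ (-α) := by
    simpa only [sub_sub_cancel_left] using
      isEquivalent_one_div_of_tendsto_div_rpow_mul_log_rpow hasym
  have hF_equiv : F ~[atTop] fun x => (1 - β)⁻¹ * (x ^ (1 - β) * log x ^ (-α)) :=
    (isEquivalent_intervalIntegral_rpow_mul_log_rpow hγ hrecip hint).congr_left
      ((eventually_gt_atTop 0).mono fun x hx => (hF x hx).symm)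
  have hFinv_top : Tendsto Finv atTop atTop :=
    tendsto_atTop_of_monotoneOn_of_rightInverse
      ((monotoneOn_intervalIntegral_of_nonneg hint fun x hx =>
        (one_div_pos.2 (hf_pos x (zero_le_one.trans hx))).le).congr
          fun x hx => (hF x (zero_lt_one.trans_le hx)).symm)
      ((eventually_ge_atTop 0).mono hFinv_ge) ((eventually_ge_atTop 0).mono hFinv_right)
  have hFinv_equiv :
      Finv ~[atTop] fun y => (y * (log y / (1 - β)) ^ (-(-α)) / (1 - β)⁻¹) ^ (1 - β)⁻¹ :=
    isEquivalent_of_isEquivalent_const_mul_rpow_mul_log_rpow (inv_pos.2 hγ) hγ hFinv_top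
      ((hF_equiv.comp_tendsto hFinv_top).congr_left
        ((eventually_ge_atTop 0).mono hFinv_right))
  refine ⟨(isEquivalent_iff_tendsto_one ?_).1 (hF_equiv.congr_right ?_),
    (isEquivalent_iff_tendsto_one ?_).1 (hFinv_equiv.congr_right ?_)⟩
  · filter_upwards [eventually_gt_atTop 1] with x hx
    have := log_pos hx
    positivity
  · filter_upwards with x
    rw [one_div, mul_assoc]
  · filter_upwards [eventually_gt_atTop 1] with x hx
    have := log_pos hx
    positivity
  · filter_upwards [eventually_ge_atTop 1] with y hy
    rw [neg_neg, mul_div_rpow_div_inv_rpow_inv hγ (zero_le_one.trans hy) (log_nonneg hy)]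

theorem stmt_15 (f F Finv : ℝ → ℝ) (α β : ℝ)
    (hβ : β ∈ Set.Ioo (0:ℝ) 1)
    (hf_cont : ContinuousOn f (Set.Ici 0))
    (hf_pos : ∀ x ∈ Set.Ici (0:ℝ), 0 < f x)
    (hasym : Tendsto (fun x => f x / (x ^ β * Real.log x ^ α)) atTop (nhds 1))
    (hF : ∀ x > (0:ℝ), F x = ∫ u in (1:ℝ)..x, 1 / f u)
    (hFinv_right : ∀ t ≥ (0:ℝ), F (Finv t) = t)
    (hFinv_ge : ∀ t ≥ (0:ℝ), 1 ≤ Finv t)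
    (hFinv_left : ∀ x ≥ (1:ℝ), Finv (F x) = x) :
    Tendsto (fun x => F x / ((1 / (1 - β)) * x ^ (1 - β) * Real.log x ^ (-α)))
        atTop (nhds 1) ∧
      Tendsto (fun y =>
          Finv y /
            ((1 - β) ^ ((1 - α) / (1 - β)) * Real.log y ^ (α / (1 - β)) *
              y ^ (1 / (1 - β)))) atTop (nhds 1) :=
  stmt_15_general f F Finv α β hβ hf_cont hf_pos hasym hF hFinv_right hFinv_ge
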